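/- For every vertex v ∈ V, the sum of the total frequencies F(e) over the n−1 edges e incident to v equals (i−1)²·C(n−1,i−1). Equivalently, the sum over the n−1 edges incident to v of the probabilities p_i(e) equals 2(n−1)/i. -/

import Mathlib

open Finset

/-- The length of a path, given as a list of vertices, with respect to the
distance function `d`: the sum of `d` over consecutive entries. -/
def pathLen {V : Type*} (d : V → V → ℝ) (P : List V) : ℝ :=
  ((P.zip P.tail).map fun p => d p.1 p.2).sum

/-- A path (list of vertices) contains the edge `{x, y}` iff `x` and `y`
occur consecutively in it (in either order). -/
def ContainsEdge {V : Type*} (P : List V) (x y : V) : Prop :=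
  [x, y] <:+: P ∨ [y, x] <:+: P

/-- A Hamiltonian path of the whole (finite) vertex type `V` from `u` to `v`:
a duplicate-free list of all vertices starting at `u` and ending at `v`. -/
def IsHamPath {V : Type*} (P : List V) (u v : V) : Prop :=
  P.Nodup ∧ (∀ x : V, x ∈ P) ∧ P.head? = some u ∧ P.getLast? = some v

/-- A Hamiltonian path of the vertex subset `S` from `u` to `v`: a
duplicate-free list of exactly the vertices of `S` starting at `u` and ending
at `v`. -/
def IsHamPathOn {V : Type*} (S : Finset V) (P : List V) (u v : V) : Prop :=
  P.Nodup ∧ (∀ x : V, x ∈ P ↔ x ∈ S) ∧ P.head? = some u ∧ P.getLast? = some v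

/-- The frequency of the edge `e` in the (frequency) subgraph on `S`: the number
of unordered pairs `{u, v}` of distinct vertices of `S` whose optimal path
`OP S u v` contains `e`. -/
noncomputable def freqOn {V : Type*} (OP : Finset V → V → V → List V) (S : Finset V)
    (e : Sym2 V) : ℕ :=
  Nat.card {p : Sym2 V // ¬ p.IsDiag ∧
    ∃ u v : V, p = s(u, v) ∧ u ∈ S ∧ v ∈ S ∧
      ∃ x y : V, e = s(x, y) ∧ ContainsEdge (OP S u v) x y}

/-- The total frequency `F(e)` of the edge `e`: the sum of its frequencies over
all `i`-element vertex subsets containing (both endpoints of) `e`. -/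
noncomputable def totalFreq {V : Type*} [Fintype V] [DecidableEq V]
    (OP : Finset V → V → V → List V) (i : ℕ) (e : Sym2 V) : ℕ :=
  ∑ S ∈ (Finset.univ.powersetCard i).filter (fun S => e ∈ S.sym2), freqOn OP S e

/-! Fix an `i`-set `S ∋ v`. Summing `f_S(vu)` over `u ∈ S` counts, for every pair `{a, b}` of `S`,
the edges of `OP_S(a, b)` at `v`: two, unless `v ∈ {a, b}`, where there is one. So the sum is
`2·C(i, 2) − (i − 1) = (i − 1)²`, and each of the `C(n − 1, i − 1)` sets `S ∋ v`
contributes this amount to the total frequency. -/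

section

variable {V : Type*}

instance [DecidableEq V] (P : List V) (x y : V) : Decidable (ContainsEdge P x y) :=
  inferInstanceAs (Decidable (_ ∨ _))

theorem containsEdge_comm {P : List V} {x y : V} : ContainsEdge P x y ↔ ContainsEdge P y x :=
  or_comm

theorem containsEdge_reverse {P : List V} {x y : V} :
    ContainsEdge P.reverse x y ↔ ContainsEdge P x y := by
  have key : ∀ a b : V, [a, b] <:+: P.reverse ↔ [b, a] <:+: P := fun a b => by
    simpa using List.reverse_infix (l₁ := [b, a]) (l₂ := P)
  rw [ContainsEdge, ContainsEdge, key, key, or_comm]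

theorem exists_sym2_eq_and_containsEdge_iff {P : List V} {x y : V} :
    (∃ a b, s(x, y) = s(a, b) ∧ ContainsEdge P a b) ↔ ContainsEdge P x y := by
  constructor
  · rintro ⟨a, b, hab, h⟩
    rcases Sym2.eq_iff.mp hab with ⟨rfl, rfl⟩ | ⟨rfl, rfl⟩
    exacts [h, containsEdge_comm.mp h]
  · exact fun h => ⟨x, y, rfl, h⟩

theorem ContainsEdge.mem_right {P : List V} {x y : V} (h : ContainsEdge P x y) : y ∈ P := by
  rcases h with h | h <;> exact h.subset (by simp)

theorem ContainsEdge.ne {P : List V} (hP : P.Nodup) {x y : V} (h : ContainsEdge P x y) :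
    x ≠ y := by
  rintro rfl
  rcases h with h | h <;> simpa using h.nodup hP

theorem List.Nodup.append_cons_inj {A B C D : List V} {v : V} (h : (A ++ v :: B).Nodup)
    (heq : A ++ v :: B = C ++ v :: D) : A = C ∧ B = D := by
  classical
  have hvA : v ∉ A := fun hv => (List.nodup_cons.mp (List.nodup_middle.mp h)).1 (by simp [hv])
  have hvC : v ∉ C := by
    rw [heq] at h
    exact fun hv => (List.nodup_cons.mp (List.nodup_middle.mp h)).1 (by simp [hv])
  have hlen : A.length = C.length := by
    have := congrArg (List.idxOf v) heq
    simpa [List.idxOf_append_of_notMem hvA, List.idxOf_append_of_notMem hvC] using this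
  obtain ⟨rfl, hBD⟩ := List.append_inj heq hlen
  exact ⟨rfl, List.cons_injective hBD⟩

theorem List.Nodup.infix_cons_pair_iff {A B : List V} {v u : V} (h : (A ++ v :: B).Nodup) :
    [v, u] <:+: A ++ v :: B ↔ B.head? = some u := by
  constructor
  · rintro ⟨C, D, hCD⟩
    obtain ⟨-, rfl⟩ := h.append_cons_inj (C := C) (D := u :: D) (by simpa using hCD.symm)
    rfl
  · intro hB
    obtain ⟨B', rfl⟩ : ∃ B', B = u :: B' := by
      cases B <;> simp_all
    exact ⟨A, B', by simp⟩

theorem List.Nodup.containsEdge_append_cons_iff {A B : List V} {v u : V}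
    (h : (A ++ v :: B).Nodup) :
    ContainsEdge (A ++ v :: B) v u ↔ B.head? = some u ∨ A.getLast? = some u := by
  have hrev : (B.reverse ++ v :: A.reverse).Nodup := by simpa using List.nodup_reverse.mpr h
  have hleft : [u, v] <:+: A ++ v :: B ↔ A.getLast? = some u := by
    rw [← List.reverse_infix]
    simpa [List.head?_reverse] using hrev.infix_cons_pair_iff (u := u)
  rw [ContainsEdge, h.infix_cons_pair_iff, hleft]

theorem List.Nodup.card_filter_containsEdge_add [DecidableEq V] {P : List V} {v : V}
    (hP : P.Nodup) (hv : v ∈ P) :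
    #{u ∈ P.toFinset | ContainsEdge P v u} + ((if P.head? = some v then 1 else 0) +
      if P.getLast? = some v then 1 else 0) = 2 := by
  obtain ⟨A, B, rfl⟩ := List.append_of_mem hv
  have hvAB : v ∉ A ++ B := (List.nodup_cons.mp (List.nodup_middle.mp hP)).1
  have hneighbors : ({u ∈ (A ++ v :: B).toFinset | ContainsEdge (A ++ v :: B) v u} : Finset V)
      = B.head?.toFinset ∪ A.getLast?.toFinset := by
    ext u
    simp only [Finset.mem_filter, List.mem_toFinset, Finset.mem_union, Option.mem_toFinset,
      Option.mem_def, hP.containsEdge_append_cons_iff, and_iff_right_iff_imp]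
    rintro (hu | hu)
    · simp [List.mem_of_mem_head? hu]
    · simp [List.mem_of_getLast? hu]
  have hdisj : _root_.Disjoint B.head?.toFinset A.getLast?.toFinset := by
    simp only [Finset.disjoint_left, Option.mem_toFinset]
    intro u hu hu'
    exact List.disjoint_of_nodup_append (List.nodup_middle.mp hP).of_cons
      (List.mem_of_getLast? hu') (List.mem_of_mem_head? hu)
  have hhead : (A ++ v :: B).head? = some v ↔ A = [] := by
    cases A <;> simp_all
  have hlast : (A ++ v :: B).getLast? = some v ↔ B = [] := by
    rcases B.eq_nil_or_concat with rfl | ⟨B', b, rfl⟩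
    · simp
    · have hbv : b ≠ v := by rintro rfl; simp at hvAB
      simp [List.getLast?_cons, hbv]
  rw [hneighbors, card_union_of_disjoint hdisj, Option.card_toFinset, Option.card_toFinset,
    if_congr hhead rfl rfl, if_congr hlast rfl rfl]
  rcases A.eq_nil_or_concat with rfl | ⟨A', a, rfl⟩ <;> cases B <;> simp

theorem IsHamPathOn.card_filter_containsEdge_add [DecidableEq V] {S : Finset V}
    {P : List V} {a b v : V} (hP : IsHamPathOn S P a b) (hv : v ∈ S) :
    #{u ∈ S.erase v | ContainsEdge P v u} + ((if a = v then 1 else 0) +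
      if b = v then 1 else 0) = 2 := by
  obtain ⟨hnodup, hmem, hhead, hlast⟩ := hP
  have hfilter : ({u ∈ S.erase v | ContainsEdge P v u} : Finset V)
      = {u ∈ P.toFinset | ContainsEdge P v u} := by
    ext u
    simp only [mem_filter, mem_erase, List.mem_toFinset, hmem]
    exact ⟨fun h => ⟨h.1.2, h.2⟩, fun h => ⟨⟨(h.2.ne hnodup).symm, h.1⟩, h.2⟩⟩
  simpa [hfilter, hhead, hlast] using hnodup.card_filter_containsEdge_add ((hmem v).mpr hv)

section
variable {α : Type*} [DecidableEq α]

theorem Sym2.two_mul_card_image_mk_of_swap_mem {T : Finset (α × α)} (hT : ∀ q ∈ T, q.1 ≠ q.2)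
    (hswap : ∀ q ∈ T, q.swap ∈ T) : 2 * #(T.image Sym2.mk.uncurry) = #T := by
  rw [card_eq_sum_card_image Sym2.mk.uncurry T, sum_const_nat, mul_comm]
  simp only [mem_image]
  rintro _ ⟨q, hq, rfl⟩
  have hfiber : ({z ∈ T | Sym2.mk.uncurry z = Sym2.mk.uncurry q} : Finset _) = {q, q.swap} := by
    ext z
    simp only [mem_filter, mem_insert, mem_singleton, Function.uncurry, Sym2.eq_iff]
    grind
  exact hfiber ▸ card_pair fun h => hT q hq (congrArg Prod.fst h)

theorem card_filter_offDiag_fst_eq {s : Finset α} {a : α} (ha : a ∈ s) :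
    #{q ∈ s.offDiag | q.1 = a} = #s - 1 := by
  have : ({q ∈ s.offDiag | q.1 = a} : Finset _) = (s.erase a).image (Prod.mk a) := by
    ext ⟨x, y⟩
    simp only [mem_filter, mem_offDiag, mem_image, mem_erase, Prod.mk.injEq]
    grind
  rw [this, card_image_of_injective _ (Prod.mk_right_injective a), card_erase_of_mem ha]

theorem card_filter_offDiag_snd_eq {s : Finset α} {a : α} (ha : a ∈ s) :
    #{q ∈ s.offDiag | q.2 = a} = #s - 1 := by
  have : ({q ∈ s.offDiag | q.2 = a} : Finset _) = (s.erase a).image (·, a) := by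
    ext ⟨x, y⟩
    simp only [mem_filter, mem_offDiag, mem_image, mem_erase, Prod.mk.injEq]
    grind
  rw [this, card_image_of_injective _ (Prod.mk_left_injective a), card_erase_of_mem ha]

end

section
variable [DecidableEq V] (OP : Finset V → V → V → List V) (S : Finset V)

theorem freqOn_eq_card_image (x y : V) :
    freqOn OP S s(x, y) =
      #(({q ∈ S.offDiag | ContainsEdge (OP S q.1 q.2) x y} : Finset _).image Sym2.mk.uncurry) := by
  rw [freqOn, ← Nat.card_eq_finsetCard]
  refine Nat.card_congr (Equiv.subtypeEquivRight fun p => ?_)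
  simp only [exists_sym2_eq_and_containsEdge_iff, mem_image, mem_filter, mem_offDiag]
  constructor
  · rintro ⟨hp, a, b, rfl, ha, hb, h⟩
    exact ⟨(a, b), ⟨⟨ha, hb, fun hab => hp (Sym2.mk_isDiag_iff.mpr hab)⟩, h⟩, rfl⟩
  · rintro ⟨⟨a, b⟩, ⟨⟨ha, hb, hab⟩, h⟩, rfl⟩
    exact ⟨Sym2.mk_isDiag_iff.not.mpr hab, a, b, rfl, ha, hb, h⟩

theorem two_mul_freqOn (hOPsymm : ∀ a b, OP S b a = (OP S a b).reverse) (x y : V) :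
    2 * freqOn OP S s(x, y) = #{q ∈ S.offDiag | ContainsEdge (OP S q.1 q.2) x y} := by
  rw [freqOn_eq_card_image]
  refine Sym2.two_mul_card_image_mk_of_swap_mem (fun q hq => ?_) (fun q hq => ?_)
  · exact (mem_offDiag.mp (mem_filter.mp hq).1).2.2
  · simp only [mem_filter, mem_offDiag, Prod.fst_swap, Prod.snd_swap] at hq ⊢
    rw [hOPsymm, containsEdge_reverse]
    tauto

theorem sum_freqOn_incident
    (hOP : ∀ a b, a ∈ S → b ∈ S → a ≠ b → IsHamPathOn S (OP S a b) a b)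
    (hOPsymm : ∀ a b, OP S b a = (OP S a b).reverse) {v : V} (hv : v ∈ S) :
    ∑ u ∈ S.erase v, freqOn OP S s(v, u) = (#S - 1) ^ 2 := by
  have hdouble : 2 * ∑ u ∈ S.erase v, freqOn OP S s(v, u)
      = ∑ q ∈ S.offDiag, #{u ∈ S.erase v | ContainsEdge (OP S q.1 q.2) v u} := by
    simp only [mul_sum, two_mul_freqOn OP S hOPsymm]
    exact sum_card_bipartiteAbove_eq_sum_card_bipartiteBelow
      (r := fun u (q : V × V) => ContainsEdge (OP S q.1 q.2) v u)
  have hdeg : ∑ q ∈ S.offDiag, (#{u ∈ S.erase v | ContainsEdge (OP S q.1 q.2) v u} +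
      ((if q.1 = v then 1 else 0) + if q.2 = v then 1 else 0)) = 2 * #S.offDiag := by
    rw [sum_congr rfl fun q hq => ?_, sum_const, smul_eq_mul, mul_comm]
    obtain ⟨ha, hb, hab⟩ := mem_offDiag.mp hq
    exact (hOP _ _ ha hb hab).card_filter_containsEdge_add hv
  have hends : ∑ q ∈ S.offDiag, ((if q.1 = v then 1 else 0) + if q.2 = v then 1 else 0)
      = 2 * (#S - 1) := by
    rw [sum_add_distrib, sum_boole, sum_boole, card_filter_offDiag_fst_eq hv,
      card_filter_offDiag_snd_eq hv, Nat.cast_id, two_mul]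
  rw [sum_add_distrib, hends, ← hdouble, offDiag_card] at hdeg
  obtain ⟨m, hm⟩ : ∃ m, #S = m + 1 := ⟨#S - 1, by have := card_pos.mpr ⟨v, hv⟩; omega⟩
  have hsq : (m + 1) * (m + 1) - (m + 1) = m ^ 2 + m := Nat.sub_eq_of_eq_add (by ring)
  rw [hm, hsq, Nat.add_sub_cancel] at hdeg
  rw [hm, Nat.add_sub_cancel]
  omega

end

theorem card_filter_mem_powersetCard_univ [Fintype V] [DecidableEq V] (v : V) {i : ℕ}
    (hi : 1 ≤ i) :
    #{S ∈ (univ : Finset V).powersetCard i | v ∈ S} = (Fintype.card V - 1).choose (i - 1) := by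
  simpa using card_filter_powersetCard_subset {v} univ i (subset_univ _) (by simpa using hi)

theorem sum_totalFreq_incident [Fintype V] [DecidableEq V] (OP : Finset V → V → V → List V)
    {i : ℕ} (hi : 1 ≤ i)
    (hOP : ∀ S : Finset V, #S = i → ∀ a b, a ∈ S → b ∈ S → a ≠ b → IsHamPathOn S (OP S a b) a b)
    (hOPsymm : ∀ S : Finset V, #S = i → ∀ a b, OP S b a = (OP S a b).reverse) (v : V) :
    ∑ u ∈ univ.erase v, totalFreq OP i s(v, u)
      = (i - 1) ^ 2 * (Fintype.card V - 1).choose (i - 1) := by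
  have hperS : ∀ S ∈ (univ : Finset V).powersetCard i,
      ∑ u ∈ univ.erase v, (if s(v, u) ∈ S.sym2 then freqOn OP S s(v, u) else 0)
        = if v ∈ S then (i - 1) ^ 2 else 0 := by
    intro S hS
    have hS : #S = i := mem_powersetCard_univ.mp hS
    by_cases hv : v ∈ S
    · have hsupport : ({u ∈ univ.erase v | s(v, u) ∈ S.sym2} : Finset V) = S.erase v := by
        ext u
        simp [hv, and_comm]
      rw [if_pos hv, ← sum_filter, hsupport,
        sum_freqOn_incident OP S (hOP S hS) (hOPsymm S hS) hv, hS]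
    · rw [if_neg hv]
      exact sum_eq_zero fun u _ => if_neg fun h => hv (mk_mem_sym2_iff.mp h).1
  calc ∑ u ∈ univ.erase v, totalFreq OP i s(v, u)
      = ∑ S ∈ (univ : Finset V).powersetCard i, ∑ u ∈ univ.erase v,
          (if s(v, u) ∈ S.sym2 then freqOn OP S s(v, u) else 0) := by
        simp only [totalFreq, sum_filter]
        exact sum_comm
    _ = #{S ∈ (univ : Finset V).powersetCard i | v ∈ S} * (i - 1) ^ 2 := by
        rw [sum_congr rfl hperS, ← sum_filter, sum_const, smul_eq_mul]
    _ = (i - 1) ^ 2 * (Fintype.card V - 1).choose (i - 1) := by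
        rw [card_filter_mem_powersetCard_univ v hi, mul_comm]

end

theorem cast_sq_mul_choose_div_eq {n i : ℕ} (hi : 2 ≤ i) (hin : i ≤ n) :
    (((i - 1) ^ 2 * (n - 1).choose (i - 1) : ℕ) : ℚ) /
        ((i : ℚ) * ((i : ℚ) - 1) / 2 * ((n - 2).choose (i - 2) : ℚ))
      = 2 * ((n : ℚ) - 1) / i := by
  obtain ⟨k, rfl⟩ : ∃ k, i = k + 2 := ⟨i - 2, by omega⟩
  obtain ⟨m, rfl⟩ : ∃ m, n = m + 2 := ⟨n - 2, by omega⟩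
  have hpascal : ((m + 1 : ℕ) : ℚ) * m.choose k = (m + 1).choose (k + 1) * (k + 1 : ℕ) := by
    exact_mod_cast Nat.add_one_mul_choose_eq m k
  have hchoose : (m.choose k : ℚ) ≠ 0 := by
    exact_mod_cast (Nat.choose_pos (by omega : k ≤ m)).ne'
  simp only [Nat.add_sub_cancel, show k + 2 - 1 = k + 1 by omega,
    show m + 2 - 1 = m + 1 by omega] at hpascal ⊢
  push_cast at hpascal ⊢
  have hk : ((k : ℚ) + 2) * ((k : ℚ) + 2 - 1) / 2 ≠ 0 := by ring_nf; positivity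
  rw [div_eq_div_iff (mul_ne_zero hk hchoose) (by positivity)]
  linear_combination (-(k + 1) * (k + 2) : ℚ) * hpascal

theorem stmt13_general {V : Type*} [Fintype V] [DecidableEq V] (n i : ℕ) (hi : 4 ≤ i) (hin : i ≤ n)
    (hcard : Fintype.card V = n)
    (OP : Finset V → V → V → List V)
    (hOP : ∀ S : Finset V, S.card = i → ∀ u v : V, u ∈ S → v ∈ S → u ≠ v →
      IsHamPathOn S (OP S u v) u v)
    (hOPsymm : ∀ (S : Finset V) (u v : V), OP S v u = (OP S u v).reverse) :
    ∀ v : V,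
      (∑ u ∈ Finset.univ.erase v, totalFreq OP i s(v, u))
        = (i - 1) ^ 2 * (n - 1).choose (i - 1) ∧
      (∑ u ∈ Finset.univ.erase v,
          (totalFreq OP i s(v, u) : ℚ) /
            (((i : ℚ) * ((i : ℚ) - 1) / 2) * ((n - 2).choose (i - 2) : ℚ)))
        = 2 * ((n : ℚ) - 1) / (i : ℚ) := by
  intro v
  have htotal := sum_totalFreq_incident OP (by omega) hOP (fun S _ => hOPsymm S) v
  rw [hcard] at htotal
  refine ⟨htotal, ?_⟩
  rw [← sum_div, ← Nat.cast_sum, htotal]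
  exact cast_sq_mul_choose_div_eq (by omega) hin

/-- For every vertex `v`, the total frequencies of the `n - 1`
edges incident to `v` sum to `(i-1)² · C(n-1, i-1)`; equivalently, the
probabilities of these edges sum to `2(n-1)/i`. -/
theorem stmt13 {V : Type*} [Fintype V] [DecidableEq V] (n i : ℕ) (hi : 4 ≤ i) (hin : i ≤ n)
    (hcard : Fintype.card V = n)
    (d : V → V → ℝ) (hdsymm : ∀ u v : V, d u v = d v u)
    (hdpos : ∀ u v : V, u ≠ v → 0 < d u v)
    (OP : Finset V → V → V → List V)
    (hOP : ∀ S : Finset V, S.card = i → ∀ u v : V, u ∈ S → v ∈ S → u ≠ v →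
      IsHamPathOn S (OP S u v) u v)
    (hOPmin : ∀ S : Finset V, S.card = i → ∀ u v : V, u ∈ S → v ∈ S → u ≠ v →
      ∀ Q : List V, IsHamPathOn S Q u v → pathLen d (OP S u v) ≤ pathLen d Q)
    (hOPuniq : ∀ S : Finset V, S.card = i → ∀ u v : V, u ∈ S → v ∈ S → u ≠ v →
      ∀ Q : List V, IsHamPathOn S Q u v → pathLen d Q = pathLen d (OP S u v) →
        Q = OP S u v)
    (hOPsymm : ∀ (S : Finset V) (u v : V), OP S v u = (OP S u v).reverse) :
    ∀ v : V,
      (∑ u ∈ Finset.univ.erase v, totalFreq OP i s(v, u))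
        = (i - 1) ^ 2 * (n - 1).choose (i - 1) ∧
      (∑ u ∈ Finset.univ.erase v,
          (totalFreq OP i s(v, u) : ℚ) /
            (((i : ℚ) * ((i : ℚ) - 1) / 2) * ((n - 2).choose (i - 2) : ℚ)))
        = 2 * ((n : ℚ) - 1) / (i : ℚ) :=
  stmt13_general n i hi hin hcard OP hOP hOPsymm
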